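/- For every L ≥ 2, all J, q > 0, and every n ≥ 0, the distance to stationarity of the PCA is bounded by the tail of the hitting time of the all-plus configuration started from the all-minus configuration: sup_{σ∈S} ‖P^n(σ,·) − π_PCA‖_TV ≤ ∑_{τ ≠ 1} Q^n(−1, τ). -/

import Mathlib

open Real Filter MeasureTheory

noncomputable section

/-- A site of the 2d discrete torus `(ℤ/Lℤ)²`. -/
abbrev Site (L : ℕ) := ZMod L × ZMod L

/-- A spin configuration on the torus, `true = +1`, `false = -1`. -/
abbrev Cfg (L : ℕ) := Site L → Bool

/-- The real spin value of a Boolean spin. -/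
def spin (b : Bool) : ℝ := if b then 1 else -1

/-- The up neighbor. -/
def upN {L : ℕ} (x : Site L) : Site L := (x.1, x.2 + 1)
/-- The right neighbor. -/
def rtN {L : ℕ} (x : Site L) : Site L := (x.1 + 1, x.2)
/-- The down neighbor. -/
def dnN {L : ℕ} (x : Site L) : Site L := (x.1, x.2 - 1)
/-- The left neighbor. -/
def lfN {L : ℕ} (x : Site L) : Site L := (x.1 - 1, x.2)

/-- The pair Hamiltonian `H(σ,τ) = −∑_x [J σ_x (τ_{x^u} + τ_{x^r}) + q σ_x τ_x]`. -/
def pairH (L : ℕ) [NeZero L] (J q : ℝ) (σ τ : Cfg L) : ℝ :=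
  - ∑ x : Site L, (J * spin (σ x) * (spin (τ (upN x)) + spin (τ (rtN x)))
      + q * spin (σ x) * spin (τ x))

/-- The normalization `Z_σ = ∑_τ e^{−H(σ,τ)}`. -/
def Zconf (L : ℕ) [NeZero L] (J q : ℝ) (σ : Cfg L) : ℝ :=
  ∑ τ : Cfg L, Real.exp (-(pairH L J q σ τ))

/-- The PCA transition probabilities `P(σ,τ) = e^{−H(σ,τ)}/Z_σ`. -/
def Ptrans (L : ℕ) [NeZero L] (J q : ℝ) (σ τ : Cfg L) : ℝ :=
  Real.exp (-(pairH L J q σ τ)) / Zconf L J q σ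

/-- `Z_PCA = ∑_σ Z_σ`. -/
def Zpca (L : ℕ) [NeZero L] (J q : ℝ) : ℝ := ∑ σ : Cfg L, Zconf L J q σ

/-- The PCA stationary measure `π_PCA(σ) = Z_σ / Z_PCA`. -/
def piPCA (L : ℕ) [NeZero L] (J q : ℝ) (σ : Cfg L) : ℝ := Zconf L J q σ / Zpca L J q

/-- The Ising Hamiltonian `H_G(σ) = −J ∑_{(x,y)} σ_x σ_y`, the sum over (unordered)
nearest-neighbor pairs of the torus, each pair being counted once via its up/right bond. -/
def isingH (L : ℕ) [NeZero L] (J : ℝ) (σ : Cfg L) : ℝ :=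
  - J * ∑ x : Site L, spin (σ x) * (spin (σ (upN x)) + spin (σ (rtN x)))

/-- The Ising partition function. -/
def Zg (L : ℕ) [NeZero L] (J : ℝ) : ℝ := ∑ σ : Cfg L, Real.exp (-(isingH L J σ))

/-- The Ising Gibbs measure `π_G(σ) = e^{−H_G(σ)}/Z_G`. -/
def piG (L : ℕ) [NeZero L] (J : ℝ) (σ : Cfg L) : ℝ := Real.exp (-(isingH L J σ)) / Zg L J

/-- Total variation distance between two measures on configuration space. -/
def tv (L : ℕ) [NeZero L] (μ ν : Cfg L → ℝ) : ℝ := (1/2) * ∑ σ : Cfg L, |μ σ - ν σ|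

/-- The all-plus configuration. -/
def plusCfg (L : ℕ) : Cfg L := fun _ => true
/-- The all-minus configuration. -/
def minusCfg (L : ℕ) : Cfg L := fun _ => false

/-- The substochastic matrix `Q` on `S∖{1}` obtained by restricting `P`. -/
def Qmat (L : ℕ) [NeZero L] (J q : ℝ) :
    Matrix {σ : Cfg L // σ ≠ plusCfg L} {σ : Cfg L // σ ≠ plusCfg L} ℝ :=
  Matrix.of fun σ τ => Ptrans L J q σ.1 τ.1

theorem minus_ne_plus (L : ℕ) [NeZero L] : minusCfg L ≠ plusCfg L :=
  fun h => Bool.false_ne_true (congrFun h (0, 0))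

/-- The PCA transition matrix. -/
def Pmat (L : ℕ) [NeZero L] (J q : ℝ) : Matrix (Cfg L) (Cfg L) ℝ :=
  Matrix.of fun σ τ => Ptrans L J q σ τ


/-!
Given `σ`, the PCA resamples all spins independently, `τ_y = +1` with probability
`sigmoid (2 h_y(σ))`, where `h_y(σ) = J (σ_{y^d} + σ_{y^l}) + q σ_y` is increasing in `σ` for
`J, q ≥ 0`. Updating every copy of the chain with the same uniform variables `u_y` therefore gives
a monotone grand coupling. Run it from `−1`, `σ` and `ρ`: the last two copies stay above the
first, so they have merged as soon as the copy started at `−1` has reached `+1`, and the coupling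
inequality bounds `‖P^n(σ,·) − P^n(ρ,·)‖_TV` by the probability that `−1` has not hit `+1` by
time `n`. Averaging over `ρ ∼ π_PCA` concludes, since `π_PCA` is stationary: the column sums
`∑_σ e^{−H(σ,τ)}` equal `Z_τ` because both are products of `2 cosh` of local fields, and the two
products agree after writing `log cosh (J (a + b) + q c)` as `α + β c (a + b) + γ a b` and
translating on the torus.
-/

open Finset Matrix

namespace Matrix

variable {R A B : Type*} [Semiring R] [Fintype A] [Fintype B] [DecidableEq B]

def IsLumping (f : A → B) (K : Matrix A A R) (P : Matrix B B R) : Prop :=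
  ∀ a b, ∑ a' with f a' = b, K a a' = P (f a) b

variable {f : A → B} {K : Matrix A A R} {P : Matrix B B R}

lemma IsLumping.sum_mul_comp (h : IsLumping f K P) (a : A) (g : B → R) :
    ∑ a', K a a' * g (f a') = ∑ b, P (f a) b * g b := by
  rw [← sum_fiberwise univ f]
  refine sum_congr rfl fun b _ => ?_
  rw [← h a b, sum_mul]
  exact sum_congr rfl fun a' ha' => by rw [(mem_filter.1 ha').2]

lemma IsLumping.pow [DecidableEq A] (h : IsLumping f K P) (n : ℕ) :
    IsLumping f (K ^ n) (P ^ n) := by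
  induction n with
  | zero => intro a b; simp [one_apply]
  | succ n ih =>
    intro a b
    simp only [pow_succ', mul_apply]
    rw [sum_comm]
    simp only [← mul_sum, ih _ b]
    exact h.sum_mul_comp a fun b' => (P ^ n) b' b

lemma vecMul_pow_eq_self {v : B → R} {P : Matrix B B R} (h : v ᵥ* P = v) (n : ℕ) :
    v ᵥ* P ^ n = v := by
  induction n with
  | zero => exact vecMul_one v
  | succ n ih => rw [pow_succ, ← vecMul_vecMul, ih, h]

end Matrix

section Survival

variable {X : Type*} [Fintype X] [DecidableEq X]

/-- The probability that the chain started at `x` has not visited `x₀` at times `0, …, n`. -/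
def survival (P : Matrix X X ℝ) (x₀ : X) : ℕ → X → ℝ
  | 0, x => if x = x₀ then 0 else 1
  | n + 1, x => if x = x₀ then 0 else ∑ y, P x y * survival P x₀ n y

lemma survival_self (P : Matrix X X ℝ) (x₀ : X) (n : ℕ) : survival P x₀ n x₀ = 0 := by
  cases n <;> simp [survival]

lemma survival_eq_sum_pow_submatrix (P : Matrix X X ℝ) (x₀ : X) (n : ℕ)
    (x : {x // x ≠ x₀}) :
    survival P x₀ n x = ∑ y : {x // x ≠ x₀}, ((P.submatrix Subtype.val Subtype.val) ^ n) x y := by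
  induction n generalizing x with
  | zero => simp [survival, x.2, one_apply]
  | succ n ih =>
    rw [survival, if_neg x.2, Fintype.sum_eq_add_sum_subtype_ne _ x₀, survival_self, mul_zero,
      zero_add]
    simp only [pow_succ', mul_apply, submatrix_apply]
    rw [sum_comm]
    simp only [← mul_sum, ih]

end Survival

lemma sum_abs_ite_sub_ite {X : Type*} [Fintype X] [DecidableEq X] (x y : X) :
    ∑ τ, |(if x = τ then 1 else 0) - (if y = τ then 1 else 0 : ℝ)| = if x = y then 0 else 2 := by
  split_ifs with h
  · simp [h]
  · calc ∑ τ, |(if x = τ then 1 else 0) - (if y = τ then 1 else 0 : ℝ)|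
        = ∑ τ, ((if x = τ then 1 else 0) + (if y = τ then 1 else 0 : ℝ)) :=
          sum_congr rfl fun τ _ => by split_ifs <;> simp_all
      _ = 2 := by rw [sum_add_distrib, sum_ite_eq, sum_ite_eq]; norm_num

section TotalVariation

variable {L : ℕ} [NeZero L]

theorem tv_le_sum_ne {A : Type*} [Fintype A] {w : A → ℝ} (hw : 0 ≤ w) (f g : A → Cfg L) :
    tv L (fun τ => ∑ a with f a = τ, w a) (fun τ => ∑ a with g a = τ, w a)
      ≤ ∑ a with f a ≠ g a, w a := by
  have hdiff (τ) : ∑ a with f a = τ, w a - ∑ a with g a = τ, w a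
      = ∑ a, w a * ((if f a = τ then 1 else 0) - (if g a = τ then 1 else 0)) := by
    simp only [sum_filter, mul_sub, mul_ite, mul_one, mul_zero, sum_sub_distrib]
  calc tv L _ _ ≤ 1 / 2 * ∑ τ, ∑ a, w a *
        |(if f a = τ then 1 else 0) - (if g a = τ then 1 else 0 : ℝ)| := by
        rw [tv]
        gcongr with τ
        rw [hdiff]
        refine (abs_sum_le_sum_abs _ _).trans_eq (sum_congr rfl fun a _ => ?_)
        rw [abs_mul, abs_of_nonneg (hw a)]
    _ = 1 / 2 * ∑ a, w a * (if f a = g a then 0 else 2) := by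
        rw [sum_comm]
        simp only [← mul_sum, sum_abs_ite_sub_ite]
    _ = ∑ a with f a ≠ g a, w a := by
        rw [sum_filter, mul_sum]
        refine sum_congr rfl fun a _ => ?_
        by_cases h : f a = g a <;> simp [h]; ring

theorem tv_le_of_eq_sum_mul {ι : Type*} [Fintype ι] {μ ν : Cfg L → ℝ} {w : ι → ℝ}
    {κ : ι → Cfg L → ℝ} (hw : 0 ≤ w) (hw1 : ∑ i, w i = 1) (hν : ∀ τ, ν τ = ∑ i, w i * κ i τ)
    {c : ℝ} (hc : ∀ i, tv L μ (κ i) ≤ c) : tv L μ ν ≤ c :=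
  calc tv L μ ν ≤ 1 / 2 * ∑ τ, ∑ i, w i * |μ τ - κ i τ| := by
        rw [tv]
        gcongr with τ
        calc |μ τ - ν τ| = |∑ i, w i * (μ τ - κ i τ)| := by
              simp only [hν, mul_sub, sum_sub_distrib, ← sum_mul, hw1, one_mul]
          _ ≤ ∑ i, w i * |μ τ - κ i τ| := by
              refine (abs_sum_le_sum_abs _ _).trans_eq (sum_congr rfl fun i _ => ?_)
              rw [abs_mul, abs_of_nonneg (hw i)]
    _ = ∑ i, w i * tv L μ (κ i) := by
        rw [sum_comm]
        simp only [tv, mul_sum]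
        exact sum_congr rfl fun i _ => sum_congr rfl fun τ _ => by ring
    _ ≤ ∑ i, w i * c := sum_le_sum fun i _ => mul_le_mul_of_nonneg_left (hc i) (hw i)
    _ = c := by rw [← sum_mul, hw1, one_mul]

end TotalVariation

namespace BernoulliPCA

section Update

variable {V : Type*} (p : (V → Bool) → V → unitInterval)

def update (u : V → unitInterval) (σ : V → Bool) : V → Bool :=
  fun y => decide (u y < p σ y)

variable {p}

lemma update_mono (hp : Monotone p) (u : V → unitInterval) : Monotone (update p u) := by
  intro σ σ' h y
  simp only [update, Bool.le_iff_imp, decide_eq_true_eq]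
  exact fun hu => hu.trans_le (hp h y)

lemma measurable_update (σ : V → Bool) : Measurable fun u => update p u σ :=
  measurable_pi_lambda _ fun y => measurable_to_bool <| by
    simpa [update, Set.preimage] using measurableSet_lt (measurable_pi_apply y) measurable_const

end Update

variable {V : Type*} [Fintype V] (p : (V → Bool) → V → unitInterval)

def kernel : Matrix (V → Bool) (V → Bool) ℝ :=
  Matrix.of fun σ τ => ∏ y, if τ y then (p σ y : ℝ) else 1 - p σ y

def coupling (ι : Type*) : Matrix (ι → V → Bool) (ι → V → Bool) ℝ :=
  Matrix.of fun s t => volume.real ((fun u i => update p u (s i)) ⁻¹' {t})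

variable {p} {ι : Type*}

lemma measureReal_update_eq (σ τ : V → Bool) :
    volume.real {u | update p u σ = τ} = kernel p σ τ := by
  have h : {u | update p u σ = τ}
      = Set.univ.pi fun y => if τ y then Set.Iio (p σ y) else Set.Ici (p σ y) := by
    ext u
    simp only [update, Set.mem_ofPred_eq, funext_iff, Set.mem_pi, Set.mem_univ, true_implies]
    refine forall_congr' fun y => ?_
    cases τ y <;> simp
  rw [h, measureReal_def, volume_pi_pi, ENNReal.toReal_prod, kernel, of_apply]
  refine prod_congr rfl fun y _ => ?_
  cases τ y <;> simp [unitInterval.nonneg, unitInterval.le_one]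

lemma coupling_nonneg (s t : ι → V → Bool) : 0 ≤ coupling p ι s t := measureReal_nonneg

lemma exists_update_eq_of_coupling_ne_zero {s t : ι → V → Bool} (h : coupling p ι s t ≠ 0) :
    ∃ u, ∀ i, update p u (s i) = t i := by
  obtain ⟨u, hu⟩ := nonempty_of_measureReal_ne_zero h
  exact ⟨u, fun i => congrFun hu i⟩

variable [DecidableEq V] [Fintype ι] [DecidableEq ι]

lemma isLumping_coupling (i : ι) : (coupling p ι).IsLumping (fun t => t i) (kernel p) := by
  intro s τ
  rw [← measureReal_update_eq, coupling]
  simp only [of_apply]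
  rw [sum_measureReal_preimage_singleton]
  · congr 1
    ext u
    simp
  · exact fun t _ => measurable_pi_lambda _ (fun i => measurable_update (s i))
      (measurableSet_singleton t)

lemma coupling_pow_apply_eq_zero (n : ℕ) {s t : ι → V → Bool} {i j : ι} (hs : s i = s j)
    (ht : t i ≠ t j) : (coupling p ι ^ n) s t = 0 := by
  induction n generalizing s with
  | zero => exact one_apply_ne fun h => ht (h ▸ hs)
  | succ n ih =>
    rw [pow_succ', mul_apply]
    refine sum_eq_zero fun r _ => ?_
    by_cases hr : coupling p ι s r = 0
    · rw [hr, zero_mul]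
    · obtain ⟨u, hu⟩ := exists_update_eq_of_coupling_ne_zero hr
      rw [ih (by rw [← hu, ← hu, hs]), mul_zero]

lemma sum_coupling_pow_ne_eq_zero_of_eq_top (n : ℕ) {s : Fin 3 → V → Bool} (h₁ : s 0 ≤ s 1)
    (h₂ : s 0 ≤ s 2) (htop : s 0 = ⊤) :
    ∑ t with t 1 ≠ t 2, (coupling p (Fin 3) ^ n) s t = 0 := by
  rw [htop, top_le_iff] at h₁ h₂
  exact sum_eq_zero fun t ht => coupling_pow_apply_eq_zero n (h₁.trans h₂.symm) (mem_filter.1 ht).2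

theorem sum_coupling_pow_ne_le_survival (hp : Monotone p) (n : ℕ) (s : Fin 3 → V → Bool)
    (h₁ : s 0 ≤ s 1) (h₂ : s 0 ≤ s 2) :
    ∑ t with t 1 ≠ t 2, (coupling p (Fin 3) ^ n) s t ≤ survival (kernel p) ⊤ n (s 0) := by
  induction n generalizing s with
  | zero =>
    obtain htop | htop := eq_or_ne (s 0) ⊤
    · rw [sum_coupling_pow_ne_eq_zero_of_eq_top 0 h₁ h₂ htop, htop, survival_self]
    simp only [pow_zero, one_apply, sum_ite_eq, mem_filter, mem_univ, true_and, ite_not,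
      survival, htop, if_false]
    exact ite_le_one zero_le_one le_rfl
  | succ n ih =>
    obtain htop | htop := eq_or_ne (s 0) ⊤
    · rw [sum_coupling_pow_ne_eq_zero_of_eq_top _ h₁ h₂ htop, htop, survival_self]
    calc ∑ t with t 1 ≠ t 2, (coupling p (Fin 3) ^ (n + 1)) s t
        = ∑ r, coupling p (Fin 3) s r * ∑ t with t 1 ≠ t 2, (coupling p (Fin 3) ^ n) r t := by
          simp only [pow_succ', mul_apply, mul_sum]
          exact sum_comm
      _ ≤ ∑ r, coupling p (Fin 3) s r * survival (kernel p) ⊤ n (r 0) := by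
          refine sum_le_sum fun r _ => ?_
          obtain hr | hr := eq_or_ne (coupling p (Fin 3) s r) 0
          · rw [hr, zero_mul, zero_mul]
          obtain ⟨u, hu⟩ := exists_update_eq_of_coupling_ne_zero hr
          refine mul_le_mul_of_nonneg_left (ih r ?_ ?_) (coupling_nonneg s r)
          · exact hu 0 ▸ hu 1 ▸ update_mono hp u h₁
          · exact hu 0 ▸ hu 2 ▸ update_mono hp u h₂
      _ = survival (kernel p) ⊤ (n + 1) (s 0) := by
          rw [survival, if_neg htop]
          exact (isLumping_coupling 0).sum_mul_comp s _

theorem tv_pow_le_survival {L : ℕ} [NeZero L] {p : Cfg L → Site L → unitInterval}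
    (hp : Monotone p) (n : ℕ) (σ ρ : Cfg L) :
    tv L (fun τ => (kernel p ^ n) σ τ) (fun τ => (kernel p ^ n) ρ τ)
      ≤ survival (kernel p) ⊤ n ⊥ := by
  let s : Fin 3 → Cfg L := ![⊥, σ, ρ]
  calc tv L (fun τ => (kernel p ^ n) σ τ) (fun τ => (kernel p ^ n) ρ τ)
      = tv L (fun τ => ∑ t with t 1 = τ, (coupling p (Fin 3) ^ n) s t)
          (fun τ => ∑ t with t 2 = τ, (coupling p (Fin 3) ^ n) s t) := by
        simp only [((isLumping_coupling 1).pow n) s, ((isLumping_coupling 2).pow n) s]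
        rfl
    _ ≤ ∑ t with t 1 ≠ t 2, (coupling p (Fin 3) ^ n) s t :=
        tv_le_sum_ne (pow_apply_nonneg coupling_nonneg n s) _ _
    _ ≤ survival (kernel p) ⊤ n ⊥ := sum_coupling_pow_ne_le_survival hp n s bot_le bot_le

end BernoulliPCA

lemma sum_exp_spin_mul {V : Type*} [Fintype V] [DecidableEq V] (a : V → ℝ) :
    ∑ σ : V → Bool, exp (∑ x, spin (σ x) * a x) = ∏ x, 2 * cosh (a x) := by
  have h x : 2 * cosh (a x) = ∑ b : Bool, exp (spin b * a x) := by
    simp [spin, cosh_eq]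
    ring
  simp only [h, Fintype.prod_sum, exp_sum]

lemma spin_monotone : Monotone spin := by
  rintro (_ | _) (_ | _) h <;> simp_all [spin, Bool.le_iff_imp]

/-- The left side is invariant under flipping all three spins and under `a ↔ b`, so it only
takes the three values at `(c a, c b) = (1, 1), (1, -1), (-1, -1)`; `α, β, γ` solve the resulting
linear system. -/
lemma log_cosh_spin_decomp (J q : ℝ) : ∃ α β γ : ℝ, ∀ a b c : Bool,
    log (cosh (J * (spin a + spin b) + q * spin c))
      = α + β * (spin c * (spin a + spin b)) + γ * (spin a * spin b) := by
  refine ⟨(log (cosh (2 * J + q)) + 2 * log (cosh q) + log (cosh (2 * J - q))) / 4,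
    (log (cosh (2 * J + q)) - log (cosh (2 * J - q))) / 4,
    (log (cosh (2 * J + q)) - 2 * log (cosh q) + log (cosh (2 * J - q))) / 4, ?_⟩
  intro a b c
  cases a <;> cases b <;> cases c <;> simp only [spin, Bool.false_eq_true, if_true, if_false]
    <;> first | (ring_nf; done) | (rw [← cosh_neg]; ring_nf)

lemma exp_div_two_mul_cosh (x : ℝ) : exp x / (2 * cosh x) = sigmoid (2 * x) := by
  rw [sigmoid_def, cosh_eq, show -(2 * x) = -x + -x by ring, exp_add]
  field_simp
  have : exp x * exp (-x) = 1 := by rw [← exp_add]; simp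
  linear_combination exp (-x) * this

lemma exp_spin_mul_div_two_mul_cosh (b : Bool) (x : ℝ) :
    exp (spin b * x) / (2 * cosh x) = if b then sigmoid (2 * x) else 1 - sigmoid (2 * x) := by
  cases b
  · rw [spin, if_neg Bool.false_ne_true, if_neg Bool.false_ne_true, ← cosh_neg, neg_one_mul,
      exp_div_two_mul_cosh, mul_neg, sigmoid_neg]
  · simp [spin, exp_div_two_mul_cosh]

section Torus

variable {L : ℕ}

def localField (J q : ℝ) (σ : Cfg L) (y : Site L) : ℝ :=
  J * (spin (σ (dnN y)) + spin (σ (lfN y))) + q * spin (σ y)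

def adjointField (J q : ℝ) (τ : Cfg L) (x : Site L) : ℝ :=
  J * (spin (τ (upN x)) + spin (τ (rtN x))) + q * spin (τ x)

def plusProb (J q : ℝ) (σ : Cfg L) (y : Site L) : unitInterval :=
  unitInterval.sigmoid (2 * localField J q σ y)

lemma plusProb_monotone {J q : ℝ} (hJ : 0 ≤ J) (hq : 0 ≤ q) : Monotone (plusProb (L := L) J q) :=
  fun σ σ' h y => unitInterval.sigmoid_monotone <| by
    unfold localField
    gcongr <;> exact spin_monotone (h _)

variable [NeZero L]

lemma sum_upN_eq (f : Site L → Site L → ℝ) : ∑ x, f x (upN x) = ∑ y, f (dnN y) y := by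
  rw [← Equiv.sum_comp (Equiv.subRight ((0, 1) : Site L))]
  congr! 2 with y
  · ext <;> simp [dnN]
  · ext <;> simp [upN]

lemma sum_rtN_eq (f : Site L → Site L → ℝ) : ∑ x, f x (rtN x) = ∑ y, f (lfN y) y := by
  rw [← Equiv.sum_comp (Equiv.subRight ((1, 0) : Site L))]
  congr! 2 with y
  · ext <;> simp [lfN]
  · ext <;> simp [rtN]

lemma sum_upN_rtN_eq (f : Site L → Site L → ℝ) :
    ∑ x, f (upN x) (rtN x) = ∑ y, f (lfN y) (dnN y) := by
  rw [← Equiv.sum_comp (Equiv.subRight ((1, 1) : Site L))]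
  congr! 2 with y
  · ext <;> simp [upN, lfN]
  · ext <;> simp [rtN, dnN]

lemma neg_pairH_eq_sum_adjointField (J q : ℝ) (σ τ : Cfg L) :
    -pairH L J q σ τ = ∑ x, spin (σ x) * adjointField J q τ x := by
  simp only [pairH, neg_neg, adjointField]
  exact sum_congr rfl fun x _ => by ring

lemma neg_pairH_eq_sum_localField (J q : ℝ) (σ τ : Cfg L) :
    -pairH L J q σ τ = ∑ y, spin (τ y) * localField J q σ y := by
  have hu := sum_upN_eq fun x y => J * spin (σ x) * spin (τ y)
  have hr := sum_rtN_eq fun x y => J * spin (σ x) * spin (τ y)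
  simp only [pairH, neg_neg, localField, mul_add, sum_add_distrib] at hu hr ⊢
  rw [hu, hr]
  simp only [mul_comm, mul_left_comm]

lemma Zconf_eq_prod_cosh (J q : ℝ) (σ : Cfg L) :
    Zconf L J q σ = ∏ y, 2 * cosh (localField J q σ y) := by
  simp only [Zconf, neg_pairH_eq_sum_localField, sum_exp_spin_mul]

lemma sum_exp_neg_pairH_eq_prod_cosh (J q : ℝ) (τ : Cfg L) :
    ∑ σ, exp (-pairH L J q σ τ) = ∏ x, 2 * cosh (adjointField J q τ x) := by
  simp only [neg_pairH_eq_sum_adjointField, sum_exp_spin_mul]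

lemma prod_cosh_adjointField (J q : ℝ) (τ : Cfg L) :
    ∏ x, cosh (adjointField J q τ x) = ∏ y, cosh (localField J q τ y) := by
  obtain ⟨α, β, γ, h⟩ := log_cosh_spin_decomp J q
  have hexp (f : Site L → ℝ) : ∏ x, cosh (f x) = exp (∑ x, log (cosh (f x))) := by
    rw [exp_sum]
    exact prod_congr rfl fun x _ => (exp_log (cosh_pos _)).symm
  rw [hexp, hexp]
  congr 1
  simp only [adjointField, localField, h]
  simp only [mul_add, sum_add_distrib, ← mul_sum]
  rw [sum_upN_eq fun x y => spin (τ x) * spin (τ y), sum_rtN_eq fun x y => spin (τ x) * spin (τ y),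
    sum_upN_rtN_eq fun x y => spin (τ x) * spin (τ y)]
  simp only [mul_comm]

lemma Zconf_pos (J q : ℝ) (σ : Cfg L) : 0 < Zconf L J q σ :=
  sum_pos (fun _ _ => exp_pos _) univ_nonempty

lemma sum_exp_neg_pairH_eq_Zconf (J q : ℝ) (τ : Cfg L) :
    ∑ σ, exp (-pairH L J q σ τ) = Zconf L J q τ := by
  rw [sum_exp_neg_pairH_eq_prod_cosh, Zconf_eq_prod_cosh, prod_mul_distrib, prod_mul_distrib,
    prod_cosh_adjointField]

lemma Zpca_pos (J q : ℝ) : 0 < Zpca L J q :=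
  sum_pos (fun σ _ => Zconf_pos J q σ) univ_nonempty

lemma piPCA_nonneg (J q : ℝ) : 0 ≤ piPCA L J q := fun σ =>
  div_nonneg (Zconf_pos J q σ).le (Zpca_pos J q).le

lemma sum_piPCA (J q : ℝ) : ∑ σ, piPCA L J q σ = 1 := by
  simp only [piPCA, ← sum_div]
  exact div_self (Zpca_pos J q).ne'

lemma piPCA_vecMul_Pmat (J q : ℝ) : piPCA L J q ᵥ* Pmat L J q = piPCA L J q := by
  ext τ
  simp only [vecMul, dotProduct, Pmat, of_apply, piPCA, Ptrans]
  rw [← sum_exp_neg_pairH_eq_Zconf, sum_div]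
  refine sum_congr rfl fun σ _ => ?_
  field_simp [(Zconf_pos J q σ).ne']

lemma Pmat_eq_kernel_plusProb (J q : ℝ) : Pmat L J q = BernoulliPCA.kernel (plusProb J q) := by
  ext σ τ
  simp only [Pmat, Ptrans, BernoulliPCA.kernel, of_apply, neg_pairH_eq_sum_localField,
    Zconf_eq_prod_cosh, exp_sum, ← prod_div_distrib, exp_spin_mul_div_two_mul_cosh, plusProb]
  rfl

end Torus

open BernoulliPCA in
theorem stmt13_general (L : ℕ) [NeZero L] (J q : ℝ) (hJ : 0 < J) (hq : 0 < q)
    (n : ℕ) :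
    (⨆ σ : Cfg L, tv L (fun τ => (Pmat L J q ^ n) σ τ) (piPCA L J q))
      ≤ ∑ τ : {σ : Cfg L // σ ≠ plusCfg L},
          (Qmat L J q ^ n) ⟨minusCfg L, minus_ne_plus L⟩ τ := by
  refine (ciSup_le fun σ => ?_).trans_eq
    (survival_eq_sum_pow_submatrix (Pmat L J q) (plusCfg L) n ⟨minusCfg L, minus_ne_plus L⟩)
  refine tv_le_of_eq_sum_mul (piPCA_nonneg J q) (sum_piPCA J q)
    (fun τ => (congrFun (vecMul_pow_eq_self (piPCA_vecMul_Pmat J q) n) τ).symm) fun ρ => ?_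
  rw [Pmat_eq_kernel_plusProb]
  exact tv_pow_le_survival (plusProb_monotone hJ.le hq.le) n σ ρ

/-- For every `L ≥ 2`, `J, q > 0` and every `n ≥ 0`, the distance to
stationarity of the PCA is bounded by the tail of the hitting time of `+1` started from
`−1`: `sup_σ ‖P^n(σ,·) − π_PCA‖_TV ≤ ∑_{τ≠1} Q^n(−1,τ)`. -/
theorem stmt13 (L : ℕ) [NeZero L] (hL : 2 ≤ L) (J q : ℝ) (hJ : 0 < J) (hq : 0 < q)
    (n : ℕ) :
    (⨆ σ : Cfg L, tv L (fun τ => (Pmat L J q ^ n) σ τ) (piPCA L J q))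
      ≤ ∑ τ : {σ : Cfg L // σ ≠ plusCfg L},
          (Qmat L J q ^ n) ⟨minusCfg L, minus_ne_plus L⟩ τ :=
  stmt13_general L J q hJ hq n
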